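/- For every ReLU network function N : ℝ^{d+m} → ℝ and every compact set K ⊆ ℝ^d, there exists a ReLU network function M : ℝ^{d+1} → ℝ such that M(x, j) = N(x, e_j) for all x ∈ K and all j ∈ {1, …, m}. (A learned-context network with a single scalar task input can exactly emulate any context-sensitive network with one-hot task inputs on a compact domain.) -/
import Mathlib


/-- An affine map between real coordinate spaces: `A z = W z + b`. -/
def IsAffineMap {p q : ℕ} (A : (Fin p → ℝ) → (Fin q → ℝ)) : Prop :=
  ∃ (W : Matrix (Fin q) (Fin p) ℝ) (b : Fin q → ℝ), ∀ z, A z = W.mulVec z + b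

/-- Componentwise ReLU activation. -/
def reluVec {n : ℕ} (v : Fin n → ℝ) : Fin n → ℝ := fun i => max (v i) 0

/-- `IsReLUNet N` holds iff `N = A_{K+1} ∘ σ ∘ A_K ∘ σ ∘ ⋯ ∘ σ ∘ A_1` for some `K ≥ 0`,
affine maps `A_i` and componentwise ReLU `σ`. -/
inductive IsReLUNet : ∀ {p q : ℕ}, ((Fin p → ℝ) → (Fin q → ℝ)) → Prop
  | affine {p q : ℕ} (A : (Fin p → ℝ) → (Fin q → ℝ)) (hA : IsAffineMap A) : IsReLUNet A
  | comp {p r q : ℕ} (A : (Fin r → ℝ) → (Fin q → ℝ)) (hA : IsAffineMap A)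
      (N : (Fin p → ℝ) → (Fin r → ℝ)) (hN : IsReLUNet N) :
      IsReLUNet (fun z => A (reluVec (N z)))

section Aux

lemma isAffineMap_comp {p q r : ℕ} {A : (Fin q → ℝ) → (Fin r → ℝ)}
    {B : (Fin p → ℝ) → (Fin q → ℝ)} (hA : IsAffineMap A) (hB : IsAffineMap B) :
    IsAffineMap (fun z => A (B z)) := by
  obtain ⟨W, b, hW⟩ := hA
  obtain ⟨V, c, hV⟩ := hB
  refine ⟨W * V, W.mulVec c + b, fun z => ?_⟩
  simp [hW, hV, Matrix.mulVec_add, ← Matrix.mulVec_mulVec, add_assoc]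

lemma isReLUNet_comp_affine {p q r : ℕ} {N : (Fin q → ℝ) → (Fin r → ℝ)}
    (hN : IsReLUNet N) {B : (Fin p → ℝ) → (Fin q → ℝ)} (hB : IsAffineMap B) :
    IsReLUNet (fun z => N (B z)) := by
  induction hN with
  | affine A hA => exact .affine _ (isAffineMap_comp hA hB)
  | comp A hA N₀ hN₀ ih => exact .comp A hA _ ih

lemma isReLUNet_comp_relu_affine {p q r : ℕ} {N : (Fin q → ℝ) → (Fin r → ℝ)}
    (hN : IsReLUNet N) {B : (Fin p → ℝ) → (Fin q → ℝ)} (hB : IsAffineMap B) :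
    IsReLUNet (fun z => N (reluVec (B z))) := by
  induction hN with
  | affine A hA => exact .comp A hA _ (.affine B hB)
  | comp A hA N₀ hN₀ ih => exact .comp A hA _ ih

/-- hidden unit index for task `j`, offset `r ∈ {0,1,2}`. -/
def hIdx (d : ℕ) {m : ℕ} (j : Fin m) (r : ℕ) (hr : r < 3) : Fin (d + 3*m) :=
  Fin.natAdd d ⟨3 * j.val + r, by have := j.isLt; omega⟩

/-- First affine layer: preserves `x` (shifted by `C`) and computes shifted copies
of the scalar task input. -/
def layer1 (d m : ℕ) (C : ℝ) (z : Fin (d+1) → ℝ) : Fin (d + 3*m) → ℝ :=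
  Fin.append (fun i : Fin d => z (Fin.castAdd 1 i) + C)
    (fun k : Fin (3*m) => z (Fin.natAdd d 0) - (((k : ℕ)/3 + (k : ℕ)%3 : ℕ) : ℝ))

/-- Second affine layer: unshifts `x` and combines the ReLUs into hat functions. -/
def layer2 (d m : ℕ) (C : ℝ) (y : Fin (d + 3*m) → ℝ) : Fin (d + m) → ℝ :=
  Fin.append (fun i : Fin d => y (Fin.castAdd (3*m) i) - C)
    (fun j : Fin m => y (hIdx d j 0 (by norm_num)) - 2 * y (hIdx d j 1 (by norm_num))
      + y (hIdx d j 2 (by norm_num)))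

lemma mulVec_ite {n p : ℕ} (c : Fin n → ℝ) (f : Fin n → Fin p) (z : Fin p → ℝ)
    (k : Fin n) :
    (Matrix.of fun k l => if l = f k then c k else 0).mulVec z k = c k * z (f k) := by
  simp [Matrix.mulVec, dotProduct, ite_mul, Finset.sum_ite_eq']

lemma mulVec_ite1 {n p : ℕ} (f : Fin n → Fin p) (z : Fin p → ℝ) (k : Fin n) :
    (Matrix.of fun k l => if l = f k then (1:ℝ) else 0).mulVec z k = z (f k) := by
  simp [Matrix.mulVec, dotProduct, ite_mul, Finset.sum_ite_eq']

lemma isAffineMap_layer1 (d m : ℕ) (C : ℝ) : IsAffineMap (layer1 d m C) := by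
  refine ⟨Matrix.of (fun k l => if l = Fin.append (fun i : Fin d => Fin.castAdd 1 i)
      (fun _ : Fin (3*m) => Fin.natAdd d 0) k then (1:ℝ) else 0),
    Fin.append (fun _ : Fin d => C)
      (fun k : Fin (3*m) => -(((k : ℕ)/3 + (k : ℕ)%3 : ℕ) : ℝ)), fun z => ?_⟩
  funext k
  rw [Pi.add_apply, mulVec_ite1]
  refine Fin.addCases (motive := fun k => layer1 d m C z k =
      z (Fin.append (fun i : Fin d => Fin.castAdd 1 i) (fun _ : Fin (3*m) => Fin.natAdd d 0) k)
        + Fin.append (fun _ : Fin d => C)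
          (fun k : Fin (3*m) => -(((k : ℕ)/3 + (k : ℕ)%3 : ℕ) : ℝ)) k)
    (fun i => ?_) (fun k' => ?_) k
  · simp [layer1, Fin.append_left]
  · simp [layer1, Fin.append_right]
    ring

lemma isAffineMap_layer2 (d m : ℕ) (C : ℝ) : IsAffineMap (layer2 d m C) := by
  classical
  set fA : Fin (d+m) → Fin (d+3*m) :=
    Fin.append (fun i : Fin d => Fin.castAdd (3*m) i) (fun j : Fin m => hIdx d j 0 (by norm_num))
    with hfA
  set fB : Fin (d+m) → Fin (d+3*m) :=
    Fin.append (fun i : Fin d => Fin.castAdd (3*m) i) (fun j : Fin m => hIdx d j 1 (by norm_num))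
    with hfB
  set fC : Fin (d+m) → Fin (d+3*m) :=
    Fin.append (fun i : Fin d => Fin.castAdd (3*m) i) (fun j : Fin m => hIdx d j 2 (by norm_num))
    with hfC
  set cA : Fin (d+m) → ℝ := Fin.append (fun _ : Fin d => (1:ℝ)) (fun _ : Fin m => (1:ℝ)) with hcA
  set cB : Fin (d+m) → ℝ := Fin.append (fun _ : Fin d => (0:ℝ)) (fun _ : Fin m => (-2:ℝ)) with hcB
  set cC : Fin (d+m) → ℝ := Fin.append (fun _ : Fin d => (0:ℝ)) (fun _ : Fin m => (1:ℝ)) with hcC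
  refine ⟨(Matrix.of fun k l => if l = fA k then cA k else 0)
      + (Matrix.of fun k l => if l = fB k then cB k else 0)
      + (Matrix.of fun k l => if l = fC k then cC k else 0),
    Fin.append (fun _ : Fin d => -C) (fun _ : Fin m => (0:ℝ)), fun y => ?_⟩
  funext k
  rw [Pi.add_apply, Matrix.add_mulVec, Matrix.add_mulVec, Pi.add_apply, Pi.add_apply,
    mulVec_ite, mulVec_ite, mulVec_ite]
  refine Fin.addCases (motive := fun k => layer2 d m C y k =
      cA k * y (fA k) + cB k * y (fB k) + cC k * y (fC k)
        + Fin.append (fun _ : Fin d => -C) (fun _ : Fin m => (0:ℝ)) k)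
    (fun i => ?_) (fun j => ?_) k
  · simp [layer2, hfA, hfB, hfC, hcA, hcB, hcC, Fin.append_left]
    ring
  · simp [layer2, hfA, hfB, hfC, hcA, hcB, hcC, Fin.append_right]
    ring

lemma layer_eval (d m : ℕ) (C : ℝ) (x : Fin d → ℝ) (hx : ∀ i, 0 ≤ x i + C) (j : Fin m) :
    layer2 d m C (reluVec (layer1 d m C (Fin.append x (fun _ : Fin 1 => ((j : ℕ) + 1 : ℝ)))))
      = Fin.append x (fun i => if i = j then (1:ℝ) else 0) := by
  funext k
  refine Fin.addCases (fun i => ?_) (fun j' => ?_) k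
  · simp only [layer2, reluVec, layer1, Fin.append_left]
    rw [max_eq_left (hx i)]
    ring
  · simp only [layer2, reluVec, layer1, hIdx, Fin.append_right]
    have h0 : ((3 * (j' : ℕ) + 0)/3 + (3 * (j' : ℕ) + 0)%3 : ℕ) = (j' : ℕ) := by omega
    have h1 : ((3 * (j' : ℕ) + 1)/3 + (3 * (j' : ℕ) + 1)%3 : ℕ) = (j' : ℕ) + 1 := by omega
    have h2 : ((3 * (j' : ℕ) + 2)/3 + (3 * (j' : ℕ) + 2)%3 : ℕ) = (j' : ℕ) + 2 := by omega
    simp only [h0, h1, h2]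
    push_cast
    rcases lt_trichotomy ((j' : ℕ)) ((j : ℕ)) with h | h | h
    · have hj : ¬ (j' = j) := by
        intro hEq; rw [hEq] at h; exact lt_irrefl _ h
      have hc : ((j' : ℕ) : ℝ) + 1 ≤ ((j : ℕ) : ℝ) := by exact_mod_cast h
      rw [if_neg hj]
      rw [max_eq_left (by linarith), max_eq_left (by linarith), max_eq_left (by linarith)]
      ring
    · have hj : j' = j := Fin.ext h
      have hc : ((j' : ℕ) : ℝ) = ((j : ℕ) : ℝ) := by exact_mod_cast h
      rw [if_pos hj]
      rw [show ((j : ℕ) : ℝ) + 1 - ((j' : ℕ) : ℝ) = 1 by linarith,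
        show ((j : ℕ) : ℝ) + 1 - (((j' : ℕ) : ℝ) + 1) = 0 by linarith,
        show ((j : ℕ) : ℝ) + 1 - (((j' : ℕ) : ℝ) + 2) = -1 by linarith]
      norm_num
    · have hj : ¬ (j' = j) := by
        intro hEq; rw [hEq] at h; exact lt_irrefl _ h
      have hc : ((j : ℕ) : ℝ) + 1 ≤ ((j' : ℕ) : ℝ) := by exact_mod_cast h
      rw [if_neg hj]
      rw [max_eq_right (by linarith), max_eq_right (by linarith), max_eq_right (by linarith)]
      ring

end Aux

/-- A learned-context network with a single scalar task input can exactly emulate any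
context-sensitive network with one-hot task inputs on a compact domain: for every ReLU
network `N : ℝ^{d+m} → ℝ` and compact `K ⊆ ℝ^d`, there is a ReLU network
`M : ℝ^{d+1} → ℝ` with `M(x, j) = N(x, e_j)` for all `x ∈ K` and all `j ∈ {1, …, m}`. -/
theorem learned_context_emulates_context_sensitive (d m : ℕ) (hm : 1 ≤ m)
    (N : (Fin (d + m) → ℝ) → (Fin 1 → ℝ)) (hN : IsReLUNet N)
    (K : Set (Fin d → ℝ)) (hK : IsCompact K) :
    ∃ M : (Fin (d + 1) → ℝ) → (Fin 1 → ℝ), IsReLUNet M ∧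
      ∀ (x : Fin d → ℝ), x ∈ K → ∀ j : Fin m,
        M (Fin.append x (fun _ : Fin 1 => ((j : ℕ) + 1 : ℝ))) =
          N (Fin.append x (fun i => if i = j then (1 : ℝ) else 0)) := by
  obtain ⟨r, hr⟩ := hK.isBounded.subset_closedBall 0
  set C : ℝ := max r 0 with hCdef
  have hC0 : (0:ℝ) ≤ C := le_max_right r 0
  have hCx : ∀ x ∈ K, ∀ i, 0 ≤ x i + C := by
    intro x hx i
    have h1 : dist x 0 ≤ C := le_trans (Metric.mem_closedBall.1 (hr hx)) (le_max_left r 0)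
    have h2 := (dist_pi_le_iff hC0).1 h1 i
    rw [Pi.zero_apply, Real.dist_eq, sub_zero] at h2
    have := (abs_le.1 h2).1
    linarith
  refine ⟨fun z => N (layer2 d m C (reluVec (layer1 d m C z))), ?_, ?_⟩
  · exact isReLUNet_comp_relu_affine
      (isReLUNet_comp_affine hN (isAffineMap_layer2 d m C)) (isAffineMap_layer1 d m C)
  · intro x hx j
    exact congrArg N (layer_eval d m C x (hCx x hx) j)
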